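/- Let φ be a hyperbolic automorphism of D and let ψ be any automorphism of D. If (b_n) is a sequence in D with ψ(φ^[n](b_n)) = 0 for all n ≥ 0, then (b_n) is a Blaschke sequence: ∑_{n=0}^∞ (1 − |b_n|) < ∞. -/

import Mathlib

/-!
Conjugating by the cross-ratio `u z = (z - w₁) / (z - w₂)` of the two boundary fixed points
turns `φ z = λ (z - a) / (1 - ā z)` into multiplication by `μ = (1 - ā w₂) / (1 - ā w₁)`, and
`|μ| ≠ 1` because both fixed points lie on the circle. As `φ^[n] (b n)` is the zero `c` of `ψ`,
`u c = μ ^ n * u (b n)`, so `b n` tends to one of the fixed points `w` geometrically fast, and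
`1 - |b n| ≤ |b n - w|` is summable.
-/

/-- A (holomorphic) automorphism of the open unit disc `D = {z : |z| < 1}`:
a map of the form `z ↦ λ(z − a)/(1 − conj(a)·z)` with `a ∈ D` and `|λ| = 1`. -/
def IsDiscAut (φ : ℂ → ℂ) : Prop :=
  ∃ a lam : ℂ, ‖a‖ < 1 ∧ ‖lam‖ = 1 ∧
    ∀ z : ℂ, φ z = lam * (z - a) / (1 - (starRingEnd ℂ) a * z)

/-- An elliptic automorphism: `φ ≠ id` with a fixed point in the open disc. -/
def IsEllipticAut (φ : ℂ → ℂ) : Prop :=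
  IsDiscAut φ ∧ φ ≠ id ∧ ∃ a : ℂ, ‖a‖ < 1 ∧ φ a = a

/-- A parabolic automorphism: `φ ≠ id` with exactly one fixed point in the closed disc,
lying on the unit circle. -/
def IsParabolicAut (φ : ℂ → ℂ) : Prop :=
  IsDiscAut φ ∧ φ ≠ id ∧ ∃ w : ℂ, ‖w‖ = 1 ∧
    {z : ℂ | ‖z‖ ≤ 1 ∧ φ z = z} = {w}

/-- A hyperbolic automorphism: `φ ≠ id` with exactly two fixed points in the closed disc,
both on the unit circle. -/
def IsHyperbolicAut (φ : ℂ → ℂ) : Prop :=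
  IsDiscAut φ ∧ φ ≠ id ∧ ∃ w₁ w₂ : ℂ, w₁ ≠ w₂ ∧
    ‖w₁‖ = 1 ∧ ‖w₂‖ = 1 ∧
    {z : ℂ | ‖z‖ ≤ 1 ∧ φ z = z} = {w₁, w₂}

/-- The parabolic automorphism `φ_c(z) = (1 + c − 2z)/(2c − (1 + c)z)` fixing `1`. -/
noncomputable def phiC (c : ℂ) : ℂ → ℂ := fun z => (1 + c - 2 * z) / (2 * c - (1 + c) * z)

/-- The hyperbolic automorphism `ψ_r(z) = (z − r)/(1 − r z)` fixing `−1` and `1`. -/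
noncomputable def psiR (r : ℝ) : ℂ → ℂ := fun z => (z - (r : ℂ)) / (1 - (r : ℂ) * z)

open ComplexConjugate Metric

noncomputable def discAut (a lam z : ℂ) : ℂ := lam * (z - a) / (1 - conj a * z)

lemma summable_one_sub_norm_of_norm_sub_le_geometric {E : Type*} [SeminormedAddCommGroup E]
    {b : ℕ → E} {w : E} (hb : ∀ n, ‖b n‖ ≤ 1) (hw : ‖w‖ = 1) {C r : ℝ} (hr₀ : 0 ≤ r)
    (hr₁ : r < 1) (hle : ∀ n, ‖b n - w‖ ≤ C * r ^ n) :
    Summable fun n => 1 - ‖b n‖ := by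
  refine .of_nonneg_of_le (fun n => sub_nonneg.2 (hb n)) (fun n => ?_)
    ((summable_geometric_of_lt_one hr₀ hr₁).mul_left C)
  calc 1 - ‖b n‖ = ‖w‖ - ‖b n‖ := by rw [hw]
    _ ≤ ‖b n - w‖ := by rw [norm_sub_rev]; exact norm_sub_norm_le w (b n)
    _ ≤ C * r ^ n := hle n

lemma iterate_map_eq_pow_mul {α M : Type*} [Monoid M] {f : α → α} {g : α → M} {s : Set α}
    {c : M} (hf : Set.MapsTo f s s) (hg : ∀ x ∈ s, g (f x) = c * g x) {x : α} (hx : x ∈ s)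
    (n : ℕ) : g (f^[n] x) = c ^ n * g x := by
  induction n with
  | zero => simp
  | succ n ih => rw [Function.iterate_succ_apply', hg _ (hf.iterate n hx), ih, pow_succ', mul_assoc]

section DiscAut

variable {a lam : ℂ}

lemma one_sub_conj_mul_ne_zero (ha : ‖a‖ < 1) {z : ℂ} (hz : ‖z‖ ≤ 1) : 1 - conj a * z ≠ 0 := by
  refine sub_ne_zero.2 fun h => ?_
  have : ‖conj a * z‖ < 1 := by
    rw [norm_mul, Complex.norm_conj]; nlinarith [norm_nonneg a, norm_nonneg z]
  simp [← h] at this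

lemma normSq_one_sub_conj_mul_sub_normSq_sub (a z : ℂ) :
    Complex.normSq (1 - conj a * z) - Complex.normSq (z - a) =
      (1 - Complex.normSq a) * (1 - Complex.normSq z) := by
  simp only [Complex.normSq_apply, Complex.sub_re, Complex.sub_im, Complex.mul_re,
    Complex.mul_im, Complex.conj_re, Complex.conj_im, Complex.one_re, Complex.one_im]
  ring

lemma mapsTo_discAut (ha : ‖a‖ < 1) (hlam : ‖lam‖ = 1) :
    Set.MapsTo (discAut a lam) (ball 0 1) (ball 0 1) := by
  intro z hz
  rw [mem_ball_zero_iff] at hz ⊢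
  have hd := one_sub_conj_mul_ne_zero ha hz.le
  have ha' : Complex.normSq a < 1 := by rw [← Complex.sq_norm]; nlinarith [norm_nonneg a]
  have hz' : Complex.normSq z < 1 := by rw [← Complex.sq_norm]; nlinarith [norm_nonneg z]
  rw [discAut, norm_div, norm_mul, hlam, one_mul, div_lt_one (norm_pos_iff.2 hd),
    ← sq_lt_sq₀ (norm_nonneg _) (norm_nonneg _), Complex.sq_norm, Complex.sq_norm, ← sub_pos,
    normSq_one_sub_conj_mul_sub_normSq_sub]
  exact mul_pos (sub_pos.2 ha') (sub_pos.2 hz')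

lemma eq_of_discAut_eq_zero (hlam : lam ≠ 0) {z : ℂ} (hz : 1 - conj a * z ≠ 0)
    (h : discAut a lam z = 0) : z = a := by
  simpa [discAut, hlam, hz, sub_eq_zero] using h

lemma mul_sub_eq_of_isFixedPt {w : ℂ} (hw : 1 - conj a * w ≠ 0)
    (h : Function.IsFixedPt (discAut a lam) w) : lam * (w - a) = w * (1 - conj a * w) := by
  rwa [Function.IsFixedPt, discAut, div_eq_iff hw] at h

variable {w₁ w₂ : ℂ}

-- Vieta's formula for the quadratic fixed-point equation.
lemma eq_one_sub_conj_mul_add (hne : w₁ ≠ w₂) (h₁ : lam * (w₁ - a) = w₁ * (1 - conj a * w₁))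
    (h₂ : lam * (w₂ - a) = w₂ * (1 - conj a * w₂)) : lam = 1 - conj a * (w₁ + w₂) := by
  refine mul_left_cancel₀ (sub_ne_zero.2 hne) ?_
  linear_combination h₁ - h₂

lemma discAut_sub_eq {z : ℂ} (hz : 1 - conj a * z ≠ 0)
    (h₁ : lam * (w₁ - a) = w₁ * (1 - conj a * w₁))
    (hV : lam = 1 - conj a * (w₁ + w₂)) :
    discAut a lam z - w₁ = (1 - conj a * w₂) * (z - w₁) / (1 - conj a * z) := by
  rw [discAut, eq_div_iff hz, sub_mul, div_mul_cancel₀ _ hz]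
  linear_combination h₁ + (z - w₁) * hV

lemma mul_conj_one_sub_conj_mul {w : ℂ} (hw : ‖w‖ = 1)
    (h : lam * (w - a) = w * (1 - conj a * w)) :
    lam * conj (1 - conj a * w) = 1 - conj a * w := by
  have hw0 : w ≠ 0 := by rintro rfl; simp at hw
  have hww : w * conj w = 1 := by rw [Complex.mul_conj', hw]; simp
  refine mul_left_cancel₀ hw0 ?_
  simp only [map_sub, map_mul, map_one, Complex.conj_conj]
  linear_combination h - lam * a * hww

lemma norm_one_sub_conj_mul_ne (ha₀ : a ≠ 0) (ha : ‖a‖ < 1) (hne : w₁ ≠ w₂) (hw₁ : ‖w₁‖ = 1)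
    (hw₂ : ‖w₂‖ = 1) (h₁ : lam * (w₁ - a) = w₁ * (1 - conj a * w₁))
    (h₂ : lam * (w₂ - a) = w₂ * (1 - conj a * w₂)) :
    ‖1 - conj a * w₁‖ ≠ ‖1 - conj a * w₂‖ := by
  intro h
  -- `d² = λ |d|²` for `d = 1 - ā w`, so equal norms force `d₁ = ± d₂`.
  have hsq : ∀ {w : ℂ}, ‖w‖ = 1 → lam * (w - a) = w * (1 - conj a * w) →
      (1 - conj a * w) ^ 2 = lam * (‖1 - conj a * w‖ : ℂ) ^ 2 := fun hw hfix => by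
    rw [← Complex.mul_conj', ← mul_assoc, mul_comm lam, mul_assoc,
      mul_conj_one_sub_conj_mul hw hfix, sq]
  rcases sq_eq_sq_iff_eq_or_eq_neg.1 ((hsq hw₁ h₁).trans (h ▸ (hsq hw₂ h₂).symm)) with h' | h'
  · have : conj a * (w₁ - w₂) = 0 := by linear_combination -h'
    simp [sub_eq_zero, ha₀, hne] at this
  · have h2 : conj a * (w₁ + w₂) = 2 := by linear_combination -h'
    have : ‖conj a * (w₁ + w₂)‖ < 2 := by
      rw [norm_mul, Complex.norm_conj]
      calc ‖a‖ * ‖w₁ + w₂‖ ≤ ‖a‖ * 2 := by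
            gcongr; exact (norm_add_le _ _).trans (by rw [hw₁, hw₂]; norm_num)
        _ < 2 := by linarith
    simp [h2] at this

lemma crossRatio_discAut {z : ℂ} (hz : 1 - conj a * z ≠ 0)
    (h₁ : lam * (w₁ - a) = w₁ * (1 - conj a * w₁)) (h₂ : lam * (w₂ - a) = w₂ * (1 - conj a * w₂))
    (hV : lam = 1 - conj a * (w₁ + w₂)) :
    (discAut a lam z - w₁) / (discAut a lam z - w₂) =
      (1 - conj a * w₂) / (1 - conj a * w₁) * ((z - w₁) / (z - w₂)) := by
  rw [discAut_sub_eq hz h₁ hV, discAut_sub_eq hz h₂ (by rw [add_comm]; exact hV),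
    div_div_div_cancel_right₀ hz, mul_div_mul_comm]

lemma summable_one_sub_norm_of_iterate_eq (ha : ‖a‖ < 1) (hlam : ‖lam‖ = 1) (hne : w₁ ≠ w₂)
    (hw₁ : ‖w₁‖ = 1) (hw₂ : ‖w₂‖ = 1) (h₁ : lam * (w₁ - a) = w₁ * (1 - conj a * w₁))
    (h₂ : lam * (w₂ - a) = w₂ * (1 - conj a * w₂))
    (hlt : ‖1 - conj a * w₂‖ < ‖1 - conj a * w₁‖) {c : ℂ} (hc : ‖c‖ < 1) {b : ℕ → ℂ}
    (hb : ∀ n, ‖b n‖ < 1) (horbit : ∀ n, (discAut a lam)^[n] (b n) = c) :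
    Summable fun n => 1 - ‖b n‖ := by
  set μ := (1 - conj a * w₂) / (1 - conj a * w₁)
  have hμ : ‖μ‖ < 1 := by
    rw [norm_div, div_lt_one ((norm_nonneg _).trans_lt hlt)]; exact hlt
  have hu : ∀ n, (c - w₁) / (c - w₂) = μ ^ n * ((b n - w₁) / (b n - w₂)) := fun n => horbit n ▸
    iterate_map_eq_pow_mul (g := fun z => (z - w₁) / (z - w₂)) (mapsTo_discAut ha hlam)
      (fun z hz => crossRatio_discAut (one_sub_conj_mul_ne_zero ha (mem_ball_zero_iff.1 hz).le)
        h₁ h₂ (eq_one_sub_conj_mul_add hne h₁ h₂))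
      (mem_ball_zero_iff.2 (hb n)) n
  have hsub_ne : ∀ {z w : ℂ}, ‖z‖ < 1 → ‖w‖ = 1 → z - w ≠ 0 := fun hz hw h => by
    rw [sub_eq_zero.1 h, hw] at hz; exact hz.false
  set A := ‖(c - w₁) / (c - w₂)‖ with hA_def
  have hA : 0 < A := norm_pos_iff.2 (div_ne_zero (hsub_ne hc hw₁) (hsub_ne hc hw₂))
  refine summable_one_sub_norm_of_norm_sub_le_geometric (fun n => (hb n).le) hw₂
    (C := 2 / A) (norm_nonneg μ) hμ fun n => ?_
  have hbn : A * ‖b n - w₂‖ = ‖μ‖ ^ n * ‖b n - w₁‖ := by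
    rw [hA_def, hu n, norm_mul, norm_pow, norm_div (b n - w₁), mul_assoc,
      div_mul_cancel₀ _ (norm_ne_zero_iff.2 (hsub_ne (hb n) hw₂))]
  have hb₁ : ‖b n - w₁‖ ≤ 2 := (norm_sub_le _ _).trans (by linarith [hb n])
  rw [div_mul_eq_mul_div, le_div_iff₀ hA, mul_comm, hbn, mul_comm]
  exact mul_le_mul_of_nonneg_right hb₁ (by positivity)

end DiscAut

/-- If `φ` is hyperbolic, `ψ` is any disc automorphism, and `(b_n)` in `D`
satisfies `ψ(φ^[n](b_n)) = 0` for all `n`, then `(b_n)` is a Blaschke sequence. -/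
theorem stmt_5 (φ ψ : ℂ → ℂ) (hφ : IsHyperbolicAut φ) (hψ : IsDiscAut ψ)
    (b : ℕ → ℂ) (hb : ∀ n : ℕ, ‖b n‖ < 1)
    (hzero : ∀ n : ℕ, ψ (φ^[n] (b n)) = 0) :
    Summable (fun n : ℕ => 1 - ‖b n‖) := by
  obtain ⟨⟨a, lam, ha, hlam, hφ⟩, -, w₁, w₂, hne, hw₁, hw₂, hfix⟩ := hφ
  obtain rfl : φ = discAut a lam := funext hφ
  obtain ⟨c, lam', hc, hlam', hψ⟩ := hψ
  obtain rfl : ψ = discAut c lam' := funext hψ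
  have hfix' : ∀ z, (z = w₁ ∨ z = w₂) ↔ ‖z‖ ≤ 1 ∧ discAut a lam z = z := fun z => by
    simpa using (Set.ext_iff.1 hfix z).symm
  have hrel : ∀ {w : ℂ}, ‖w‖ = 1 → Function.IsFixedPt (discAut a lam) w →
      lam * (w - a) = w * (1 - conj a * w) := fun hw =>
    mul_sub_eq_of_isFixedPt (one_sub_conj_mul_ne_zero ha hw.le)
  have h₁ := hrel hw₁ ((hfix' w₁).1 (.inl rfl)).2
  have h₂ := hrel hw₂ ((hfix' w₂).1 (.inr rfl)).2
  have ha₀ : a ≠ 0 := by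
    rintro rfl
    rcases (hfix' 0).2 ⟨by simp, by simp [discAut]⟩ with rfl | rfl <;> simp_all
  have horbit : ∀ n, (discAut a lam)^[n] (b n) = c := fun n =>
    eq_of_discAut_eq_zero (norm_ne_zero_iff.1 (hlam' ▸ one_ne_zero))
      (one_sub_conj_mul_ne_zero hc
        (mem_ball_zero_iff.1 ((mapsTo_discAut ha hlam).iterate n (mem_ball_zero_iff.2 (hb n)))).le)
      (hzero n)
  rcases (norm_one_sub_conj_mul_ne ha₀ ha hne hw₁ hw₂ h₁ h₂).lt_or_gt with h | h
  · exact summable_one_sub_norm_of_iterate_eq ha hlam hne.symm hw₂ hw₁ h₂ h₁ h hc hb horbit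
  · exact summable_one_sub_norm_of_iterate_eq ha hlam hne hw₁ hw₂ h₁ h₂ h hc hb horbit
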